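/- arXiv:1201.0606 — 6 statements merged into one kernel-verified Lean document; each statement's English description precedes it below -/
import Mathlib

section
/- Let (Ω, 𝔉, μ) be a probability space, let T : Ω → Ω be measurable, and let J : Ω → ℝ be measurable with 0 ≤ J ≤ M μ-almost everywhere for some constant M > 0, and with μ({ω : J(ω) = M}) = 0. Assume the change-of-variables identity ∫_Ω (f ∘ T)·J dμ = ∫_Ω f dμ holds for every measurable f : Ω → [0,∞]. Let θ > 0 and let f ∈ L¹(μ) with f ≥ 0 a.e. satisfy M^θ·f = J^θ·J·(f ∘ T) μ-almost everywhere. Then f = 0 μ-almost everywhere. -/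
/-!
Write `g = J · (f ∘ T)`. The change of variables gives `∫ g = ∫ f`, so integrating the
eigenfunction equation gives `∫ M^θ g = M^θ ∫ f = ∫ J^θ g`. Since `J^θ < M^θ` almost
everywhere, this forces `g = 0` a.e., and then `M^θ f = J^θ g = 0`.

The only subtlety is that `f ∘ T` depends on the representative of `f`; but `g` does not,
because the change of variables says that `T` pushes `J · μ` forward to `μ`.
-/

open MeasureTheory
open scoped ENNReal

def IsJacobian {Ω : Type*} [MeasurableSpace Ω] (μ : Measure Ω) (T : Ω → Ω) (w : Ω → ℝ≥0∞) :
    Prop :=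
  ∀ F : Ω → ℝ≥0∞, Measurable F → ∫⁻ ω, F (T ω) * w ω ∂μ = ∫⁻ ω, F ω ∂μ

section

variable {Ω : Type*} [MeasurableSpace Ω] {μ : Measure Ω} {T : Ω → Ω} {w : Ω → ℝ≥0∞}

namespace IsJacobian

theorem map_withDensity_eq (hcov : IsJacobian μ T w) (hT : Measurable T) :
    (μ.withDensity w).map T = μ := by
  ext s hs
  rw [Measure.map_apply hT hs, withDensity_apply _ (hT hs), ← lintegral_indicator_one hs,
    ← hcov _ (measurable_one.indicator hs), ← lintegral_indicator (hT hs)]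
  congr 1 with ω
  by_cases hω : T ω ∈ s <;> simp [hω]

theorem comp_mul_ae_eq (hcov : IsJacobian μ T w) (hT : Measurable T) (hw : Measurable w)
    {F G : Ω → ℝ≥0∞} (hFG : F =ᵐ[μ] G) :
    (fun ω => F (T ω) * w ω) =ᵐ[μ] fun ω => G (T ω) * w ω := by
  rw [← hcov.map_withDensity_eq hT] at hFG
  have hcomp := (ae_withDensity_iff hw).1 (ae_eq_comp hT.aemeasurable hFG)
  filter_upwards [hcomp] with ω hω
  by_cases hw0 : w ω = 0
  · simp [hw0]
  · exact congrArg (· * w ω) (hω hw0)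

theorem aemeasurable_comp_mul (hcov : IsJacobian μ T w) (hT : Measurable T) (hw : Measurable w)
    {F : Ω → ℝ≥0∞} (hF : AEMeasurable F μ) :
    AEMeasurable (fun ω => F (T ω) * w ω) μ :=
  ((hF.measurable_mk.comp hT).mul hw).aemeasurable.congr
    (hcov.comp_mul_ae_eq hT hw hF.ae_eq_mk).symm

theorem lintegral_comp_mul (hcov : IsJacobian μ T w) (hT : Measurable T) (hw : Measurable w)
    {F : Ω → ℝ≥0∞} (hF : AEMeasurable F μ) :
    ∫⁻ ω, F (T ω) * w ω ∂μ = ∫⁻ ω, F ω ∂μ := by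
  rw [lintegral_congr_ae (hcov.comp_mul_ae_eq hT hw hF.ae_eq_mk), hcov _ hF.measurable_mk,
    lintegral_congr_ae hF.ae_eq_mk.symm]

end IsJacobian

theorem ae_eq_zero_of_lintegral_const_mul_le
    {c g : Ω → ℝ≥0∞} {K : ℝ≥0∞} (hg : AEMeasurable g μ) (hcK : ∀ᵐ ω ∂μ, c ω < K)
    (hfin : ∫⁻ ω, c ω * g ω ∂μ ≠ ∞) (hle : ∫⁻ ω, K * g ω ∂μ ≤ ∫⁻ ω, c ω * g ω ∂μ) :
    g =ᵐ[μ] 0 := by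
  have heq : (fun ω => c ω * g ω) =ᵐ[μ] fun ω => K * g ω :=
    ae_eq_of_ae_le_of_lintegral_le (hcK.mono fun ω h => mul_le_mul_left h.le _) hfin
      (hg.const_mul K) hle
  have hKg_lt_top := ae_lt_top' (hg.const_mul K) (ne_top_of_le_ne_top hfin hle)
  filter_upwards [heq, hcK, hKg_lt_top] with ω heq hcK hKg
  by_contra hg0
  have hK : K ≠ 0 := (pos_of_gt hcK).ne'
  have hg_top : g ω ≠ ∞ := by
    rintro hg_top
    simp [hg_top, hK] at hKg
  exact (ENNReal.mul_lt_mul_left hg0 hg_top hcK).ne heq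

end

theorem eigenfunction_eq_zero_general
    {Ω : Type*} [MeasurableSpace Ω] (μ : Measure Ω)
    (T : Ω → Ω) (hT : Measurable T)
    (J : Ω → ℝ) (hJmeas : Measurable J)
    (M : ℝ) (hM : 0 < M)
    (hJbd : ∀ᵐ ω ∂μ, 0 ≤ J ω ∧ J ω ≤ M)
    (hJM : μ {ω | J ω = M} = 0)
    (hcov : ∀ f : Ω → ENNReal, Measurable f →
      ∫⁻ ω, f (T ω) * ENNReal.ofReal (J ω) ∂μ = ∫⁻ ω, f ω ∂μ)
    (θ : ℝ) (hθ : 0 < θ)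
    (f : Ω → ℝ) (hf : Integrable f μ) (hf0 : ∀ᵐ ω ∂μ, 0 ≤ f ω)
    (heq : ∀ᵐ ω ∂μ, M ^ θ * f ω = J ω ^ θ * J ω * f (T ω)) :
    f =ᵐ[μ] 0 := by
  set e : Ω → ℝ≥0∞ := fun ω => ENNReal.ofReal (J ω)
  set F : Ω → ℝ≥0∞ := fun ω => ENNReal.ofReal (f ω)
  have hJac : IsJacobian μ T e := hcov
  have he : Measurable e := hJmeas.ennreal_ofReal
  have hF : AEMeasurable F μ := hf.1.aemeasurable.ennreal_ofReal
  have hJ_lt : ∀ᵐ ω ∂μ, J ω < M := by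
    filter_upwards [hJbd, measure_eq_zero_iff_ae_notMem.1 hJM] with ω hb hne
    exact hb.2.lt_of_ne hne
  have hF_eq : ∀ᵐ ω ∂μ, ENNReal.ofReal M ^ θ * F ω = e ω ^ θ * (F (T ω) * e ω) := by
    filter_upwards [heq, hJbd] with ω hω hb
    have hfT : M ^ θ * f ω = J ω ^ θ * (f (T ω) * J ω) := by rw [hω]; ring
    rw [ENNReal.ofReal_rpow_of_pos hM, ENNReal.ofReal_rpow_of_nonneg hb.1 hθ.le,
      ← ENNReal.ofReal_mul' hb.1, ← ENNReal.ofReal_mul (Real.rpow_nonneg hM.le θ),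
      ← ENNReal.ofReal_mul (Real.rpow_nonneg hb.1 θ), hfT]
  have hg0 : (fun ω => F (T ω) * e ω) =ᵐ[μ] 0 := by
    refine ae_eq_zero_of_lintegral_const_mul_le (c := fun ω => e ω ^ θ)
      (K := ENNReal.ofReal M ^ θ) (hJac.aemeasurable_comp_mul hT he hF) ?_ ?_ ?_
    · filter_upwards [hJ_lt] with ω hJ
      exact ENNReal.rpow_lt_rpow (ENNReal.ofReal_lt_ofReal_iff hM |>.2 hJ) hθ
    · rw [← lintegral_congr_ae hF_eq, lintegral_const_mul'' _ hF]
      exact ENNReal.mul_ne_top (by finiteness) hf.lintegral_lt_top.ne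
    · rw [lintegral_const_mul'' _ (hJac.aemeasurable_comp_mul hT he hF),
        hJac.lintegral_comp_mul hT he hF, ← lintegral_const_mul'' _ hF,
        lintegral_congr_ae hF_eq]
  have hF0 : F =ᵐ[μ] 0 := by
    filter_upwards [hF_eq, hg0] with ω hFω hgω
    simpa [hgω, hM.not_ge] using hFω
  filter_upwards [hF0, hf0] with ω hFω hfω
  exact le_antisymm (ENNReal.ofReal_eq_zero.1 hFω) hfω

/-- Let `(Ω, 𝔉, μ)` be a probability space, `T : Ω → Ω` measurable, and `J : Ω → ℝ`
measurable with `0 ≤ J ≤ M` a.e. (`M > 0`) and `μ {J = M} = 0`. Assume the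
change-of-variables identity `∫ (f ∘ T)·J dμ = ∫ f dμ` for every measurable
`f : Ω → [0,∞]`. If `θ > 0` and `f ∈ L¹(μ)` with `f ≥ 0` a.e. satisfies
`M^θ·f = J^θ·J·(f ∘ T)` a.e., then `f = 0` a.e. -/
theorem eigenfunction_eq_zero
    {Ω : Type*} [MeasurableSpace Ω] (μ : Measure Ω) [IsProbabilityMeasure μ]
    (T : Ω → Ω) (hT : Measurable T)
    (J : Ω → ℝ) (hJmeas : Measurable J)
    (M : ℝ) (hM : 0 < M)
    (hJbd : ∀ᵐ ω ∂μ, 0 ≤ J ω ∧ J ω ≤ M)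
    (hJM : μ {ω | J ω = M} = 0)
    (hcov : ∀ f : Ω → ENNReal, Measurable f →
      ∫⁻ ω, f (T ω) * ENNReal.ofReal (J ω) ∂μ = ∫⁻ ω, f ω ∂μ)
    (θ : ℝ) (hθ : 0 < θ)
    (f : Ω → ℝ) (hf : Integrable f μ) (hf0 : ∀ᵐ ω ∂μ, 0 ≤ f ω)
    (heq : ∀ᵐ ω ∂μ, M ^ θ * f ω = J ω ^ θ * J ω * f (T ω)) :
    f =ᵐ[μ] 0 :=
  eigenfunction_eq_zero_general μ T hT J hJmeas M hM hJbd hJM hcov θ hθ f hf hf0 heq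
end

section
/- Let l ≥ 1 be an integer, let E be a real normed vector space, and let S : ℝ^l → (linear isometries of E) be a map satisfying S(0) = Id and S(v+w) = S(v) ∘ S(w) for all v, w ∈ ℝ^l. Let f : ℝ^l → E satisfy the cocycle identity f(v + w) = f(v) + S(v)(f(w)) for all v, w ∈ ℝ^l. Suppose there is a real number t > 0 such that ‖f(λ·v)‖ = λ^t·‖f(v)‖ for all λ > 0 and all v ∈ ℝ^l, and suppose f is not identically zero. Then t ≤ 1. -/
/-! Since every `S v` is an isometry, the cocycle identity makes `‖f‖` subadditive, so
`‖f (2 • v)‖ ≤ 2 * ‖f v‖`; scaling gives `‖f (2 • v)‖ = 2 ^ t * ‖f v‖`, and for `f v ≠ 0`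
this forces `2 ^ t ≤ 2`. -/

theorem norm_add_le_of_cocycle {G R E : Type*} [Add G] [Semiring R] [SeminormedAddCommGroup E]
    [Module R E] {S : G → E →ₗᵢ[R] E} {f : G → E}
    (hcoc : ∀ v w, f (v + w) = f v + S v (f w)) (v w : G) :
    ‖f (v + w)‖ ≤ ‖f v‖ + ‖f w‖ := by
  rw [hcoc, ← (S v).norm_map (f w)]
  exact norm_add_le _ _

theorem cocycle_growth_exponent_le_one_general (l : ℕ)
    (E : Type*) [NormedAddCommGroup E] [NormedSpace ℝ E]
    (S : EuclideanSpace ℝ (Fin l) → (E →ₗᵢ[ℝ] E))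
    (f : EuclideanSpace ℝ (Fin l) → E)
    (hcoc : ∀ v w : EuclideanSpace ℝ (Fin l), f (v + w) = f v + S v (f w))
    (t : ℝ)
    (hscale : ∀ lam : ℝ, 0 < lam → ∀ v : EuclideanSpace ℝ (Fin l),
      ‖f (lam • v)‖ = lam ^ t * ‖f v‖)
    (hne : ∃ v : EuclideanSpace ℝ (Fin l), f v ≠ 0) :
    t ≤ 1 := by
  obtain ⟨v, hv⟩ := hne
  have hdouble : (2 : ℝ) ^ t * ‖f v‖ ≤ 2 ^ (1 : ℝ) * ‖f v‖ := by
    rw [← hscale 2 two_pos v, Real.rpow_one, two_smul, two_mul]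
    exact norm_add_le_of_cocycle hcoc v v
  exact (Real.rpow_le_rpow_left_iff one_lt_two).mp
    (le_of_mul_le_mul_right hdouble (norm_pos_iff.mpr hv))

/-- Let `E` be a real normed vector space and `S : ℝ^l → (linear isometries of E)`
with `S(0) = Id` and `S(v+w) = S(v) ∘ S(w)`. Let `f : ℝ^l → E` satisfy the cocycle
identity `f(v+w) = f(v) + S(v)(f(w))`. If there is a real `t > 0` with
`‖f(λ·v)‖ = λ^t·‖f(v)‖` for all `λ > 0` and all `v`, and `f` is not identically zero,
then `t ≤ 1`. -/
theorem cocycle_growth_exponent_le_one (l : ℕ) (hl : 1 ≤ l)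
    (E : Type*) [NormedAddCommGroup E] [NormedSpace ℝ E]
    (S : EuclideanSpace ℝ (Fin l) → (E →ₗᵢ[ℝ] E))
    (hS0 : S 0 = LinearIsometry.id)
    (hSadd : ∀ v w : EuclideanSpace ℝ (Fin l), S (v + w) = (S v).comp (S w))
    (f : EuclideanSpace ℝ (Fin l) → E)
    (hcoc : ∀ v w : EuclideanSpace ℝ (Fin l), f (v + w) = f v + S v (f w))
    (t : ℝ) (ht : 0 < t)
    (hscale : ∀ lam : ℝ, 0 < lam → ∀ v : EuclideanSpace ℝ (Fin l),
      ‖f (lam • v)‖ = lam ^ t * ‖f v‖)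
    (hne : ∃ v : EuclideanSpace ℝ (Fin l), f v ≠ 0) :
    t ≤ 1 :=
  cocycle_growth_exponent_le_one_general l E S f hcoc t hscale hne
end

section
/- Let l ≥ 1 be an integer, let E be a real normed vector space, and let S : ℝ^l → (linear isometries of E) be a map satisfying S(0) = Id and S(v+w) = S(v) ∘ S(w) for all v, w ∈ ℝ^l. Let f : ℝ^l → E satisfy the cocycle identity f(v + w) = f(v) + S(v)(f(w)) for all v, w ∈ ℝ^l, and assume S(v)(f(v)) = f(v) for all v ∈ ℝ^l. Then S(w)(f(v)) = f(v) for all v, w ∈ ℝ^l, and consequently f is additive: f(v + w) = f(v) + f(w) for all v, w ∈ ℝ^l. -/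
/-!
Comparing the two ways of expanding `f (v + w) = f (w + v)` gives the symmetry
`S w (f v) - f v = S v (f w) - f w`. Since `S v` fixes `f v`, the cocycle is additive along
the ray through `v`, so replacing `v` by `n • v` multiplies the left side by `n`, while the
right side stays bounded by `2 ‖f w‖` because `S (n • v)` is an isometry. Hence the left
side vanishes.
-/

section Cocycle

variable {G E : Type*} [AddCommMonoid G] [NormedAddCommGroup E] [NormedSpace ℝ E]

theorem eq_zero_of_forall_norm_nsmul_le {x : E} {C : ℝ} (h : ∀ n : ℕ, ‖n • x‖ ≤ C) :
    x = 0 := by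
  by_contra hx
  have hpos : 0 < ‖x‖ := norm_pos_iff.mpr hx
  obtain ⟨n, hn⟩ := exists_nat_gt (C / ‖x‖)
  have hle : (n : ℝ) * ‖x‖ ≤ C := by simpa [RCLike.norm_nsmul ℝ] using h n
  exact ((div_lt_iff₀ hpos).mp hn).not_ge hle

def IsCocycle (S : G → E →ₗᵢ[ℝ] E) (f : G → E) : Prop :=
  ∀ v w, f (v + w) = f v + S v (f w)

namespace IsCocycle

variable {S : G → E →ₗᵢ[ℝ] E} {f : G → E}

theorem map_zero (hf : IsCocycle S f) : f 0 = 0 := by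
  have h := hf 0 0
  rw [add_zero, left_eq_add] at h
  exact norm_eq_zero.mp (by rw [← (S 0).norm_map, h, norm_zero])

theorem apply_sub_self_comm (hf : IsCocycle S f) (v w : G) :
    S w (f v) - f v = S v (f w) - f w := by
  have h := hf v w
  rw [add_comm, hf w v] at h
  rw [sub_eq_sub_iff_add_eq_add, add_comm, h, add_comm]

theorem map_nsmul_of_apply_self (hf : IsCocycle S f) {v : G} (hv : S v (f v) = f v)
    (n : ℕ) : f (n • v) = n • f v := by
  induction n with
  | zero => rw [zero_smul, zero_smul, hf.map_zero]
  | succ n ih => rw [succ_nsmul', hf, ih, map_nsmul, hv, succ_nsmul']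

theorem apply_eq_of_forall_apply_self (hf : IsCocycle S f) (hfix : ∀ v, S v (f v) = f v)
    (v w : G) : S w (f v) = f v := by
  refine sub_eq_zero.mp (eq_zero_of_forall_norm_nsmul_le (C := 2 * ‖f w‖) fun n => ?_)
  calc ‖n • (S w (f v) - f v)‖ = ‖S w (f (n • v)) - f (n • v)‖ := by
        rw [hf.map_nsmul_of_apply_self (hfix v), map_nsmul, smul_sub]
    _ = ‖S (n • v) (f w) - f w‖ := by rw [hf.apply_sub_self_comm]
    _ ≤ ‖S (n • v) (f w)‖ + ‖f w‖ := norm_sub_le _ _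
    _ = 2 * ‖f w‖ := by rw [(S (n • v)).norm_map, two_mul]

end IsCocycle

end Cocycle

theorem cocycle_fixed_implies_additive_general (l : ℕ)
    (E : Type*) [NormedAddCommGroup E] [NormedSpace ℝ E]
    (S : EuclideanSpace ℝ (Fin l) → (E →ₗᵢ[ℝ] E))
    (f : EuclideanSpace ℝ (Fin l) → E)
    (hcoc : ∀ v w : EuclideanSpace ℝ (Fin l), f (v + w) = f v + S v (f w))
    (hfix : ∀ v : EuclideanSpace ℝ (Fin l), S v (f v) = f v) :
    (∀ v w : EuclideanSpace ℝ (Fin l), S w (f v) = f v) ∧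
    (∀ v w : EuclideanSpace ℝ (Fin l), f (v + w) = f v + f w) := by
  have hf : IsCocycle S f := hcoc
  have hinv := hf.apply_eq_of_forall_apply_self hfix
  exact ⟨hinv, fun v w => by rw [hcoc, hinv]⟩

/-- Let `E` be a real normed vector space and `S : ℝ^l → (linear isometries of E)`
with `S(0) = Id` and `S(v+w) = S(v) ∘ S(w)`. Let `f : ℝ^l → E` satisfy the cocycle
identity `f(v+w) = f(v) + S(v)(f(w))`, and assume `S(v)(f(v)) = f(v)` for all `v`.
Then `S(w)(f(v)) = f(v)` for all `v, w`, and consequently `f` is additive. -/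
theorem cocycle_fixed_implies_additive (l : ℕ) (hl : 1 ≤ l)
    (E : Type*) [NormedAddCommGroup E] [NormedSpace ℝ E]
    (S : EuclideanSpace ℝ (Fin l) → (E →ₗᵢ[ℝ] E))
    (hS0 : S 0 = LinearIsometry.id)
    (hSadd : ∀ v w : EuclideanSpace ℝ (Fin l), S (v + w) = (S v).comp (S w))
    (f : EuclideanSpace ℝ (Fin l) → E)
    (hcoc : ∀ v w : EuclideanSpace ℝ (Fin l), f (v + w) = f v + S v (f w))
    (hfix : ∀ v : EuclideanSpace ℝ (Fin l), S v (f v) = f v) :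
    (∀ v w : EuclideanSpace ℝ (Fin l), S w (f v) = f v) ∧
    (∀ v w : EuclideanSpace ℝ (Fin l), f (v + w) = f v + f w) :=
  cocycle_fixed_implies_additive_general l E S f hcoc hfix
end

section
/- Let K be a compact topological group and let π be a continuous linear representation of K on a real Banach space V (each π(g) is a continuous linear automorphism of V and the action map K × V → V is continuous). Assume the only K-invariant vector is 0, i.e. V^K = {0}. Then for every v ∈ V, the smallest closed convex cone containing the orbit {π(g)(v) : g ∈ K} equals the smallest closed linear subspace containing this orbit (the closed K-cyclic subrepresentation generated by v); in particular −v belongs to the closed convex cone generated by the orbit of v. -/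
/-!
Averaging over Haar measure, `∫ ρ g v dg` is a `K`-invariant vector, hence zero. For a small
neighbourhood `U` of `1`, the integral of the orbit map over `Uᶜ`, which lies in the closed cone `C`
generated by the orbit, is therefore minus its integral over `U`, which is close to `μ(U) • v`.
So `-v ∈ C`, and likewise `-ρ g v ∈ C` for every `g`: the orbit lies in the lineality space of `C`,
hence so does its closed linear span.
-/

open MeasureTheory Metric Set PointedCone
open scoped Pointwise

section ConeHull

variable {E : Type*} [AddCommGroup E] [Module ℝ E]

lemma setOf_smul_mem_convexHull_eq_hull {s : Set E} (hs : s.Nonempty) :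
    {x : E | ∃ c : ℝ, 0 ≤ c ∧ ∃ y ∈ convexHull ℝ s, x = c • y} = hull ℝ s := by
  refine subset_antisymm ?_ fun x hx => ?_
  · rintro _ ⟨c, hc, y, hy, rfl⟩
    exact (hull ℝ s).smul_mem hc (convexHull_min subset_hull (hull ℝ s).convex hy)
  induction hx using Submodule.span_induction with
  | mem x hx => exact ⟨1, zero_le_one, x, subset_convexHull ℝ s hx, (one_smul ℝ x).symm⟩
  | zero =>
    obtain ⟨y, hy⟩ := hs
    exact ⟨0, le_rfl, y, subset_convexHull ℝ s hy, (zero_smul ℝ y).symm⟩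
  | add _ _ _ _ h₁ h₂ =>
    obtain ⟨c₁, hc₁, y₁, hy₁, rfl⟩ := h₁
    obtain ⟨c₂, hc₂, y₂, hy₂, rfl⟩ := h₂
    have hsum : c₁ • y₁ + c₂ • y₂ ∈ (c₁ + c₂) • convexHull ℝ s := by
      rw [(convex_convexHull ℝ s).add_smul hc₁ hc₂]
      exact add_mem_add (smul_mem_smul_set hy₁) (smul_mem_smul_set hy₂)
    obtain ⟨y, hy, hxy⟩ := hsum
    exact ⟨c₁ + c₂, add_nonneg hc₁ hc₂, y, hy, hxy.symm⟩
  | smul a _ _ h =>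
    obtain ⟨c, hc, y, hy, rfl⟩ := h
    exact ⟨a * c, mul_nonneg a.2 hc, y, hy, by rw [mul_smul]; rfl⟩

end ConeHull

section ConeIntegral

variable {α E : Type*} [MeasurableSpace α] [NormedAddCommGroup E] [NormedSpace ℝ E]
  [CompleteSpace E] {μ : Measure α} {f : α → E} {C : PointedCone ℝ E}

lemma PointedCone.integral_mem [IsFiniteMeasure μ] (hC : IsClosed (C : Set E))
    (hf : ∀ᵐ x ∂μ, f x ∈ C) (hfi : Integrable f μ) : ∫ x, f x ∂μ ∈ C := by
  rcases eq_zero_or_neZero μ with rfl | _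
  · simp
  rw [← measure_smul_average]
  exact C.smul_mem measureReal_nonneg (C.convex.average_mem hC hf hfi)

lemma PointedCone.neg_mem_of_integral_eq_zero [TopologicalSpace α] [OpensMeasurableSpace α]
    [IsFiniteMeasure μ] [μ.IsOpenPosMeasure] (hC : IsClosed (C : Set E)) (hf : Continuous f)
    (hfi : Integrable f μ) (hfC : ∀ x, f x ∈ C) (h_int : ∫ x, f x ∂μ = 0) (a : α) :
    -f a ∈ C := by
  rw [← SetLike.mem_coe, ← hC.closure_eq, Metric.mem_closure_iff]
  intro ε hε
  set U := f ⁻¹' ball (f a) (ε / 2)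
  have hU : IsOpen U := isOpen_ball.preimage hf
  have haU : a ∈ U := mem_ball_self (half_pos hε)
  have h_avg : ⨍ x in U, f x ∂μ ∈ closedBall (f a) (ε / 2) :=
    (convex_closedBall _ _).set_average_mem isClosed_closedBall (hU.measure_ne_zero μ ⟨a, haU⟩)
      (measure_ne_top μ U) (ae_restrict_of_forall_mem hU.measurableSet
        fun x hx => ball_subset_closedBall hx) hfi.integrableOn
  -- `f` averages to zero, so minus its mean on `U` is a positive multiple of its integral on `Uᶜ`
  have h_neg_avg : -⨍ x in U, f x ∂μ = (μ.real U)⁻¹ • ∫ x in Uᶜ, f x ∂μ := by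
    rw [setAverage_eq, ← smul_neg,
      neg_eq_of_add_eq_zero_right ((integral_add_compl hU.measurableSet hfi).trans h_int)]
  refine ⟨_, h_neg_avg ▸ C.smul_mem (inv_nonneg.2 measureReal_nonneg)
    (C.integral_mem hC (ae_of_all _ fun x => hfC x) hfi.restrict), ?_⟩
  rw [dist_neg_neg]
  exact (mem_closedBall'.1 h_avg).trans_lt (half_lt_self hε)

end ConeIntegral

section Representation

variable {K : Type*} [Group K] {V : Type*} [NormedAddCommGroup V] [NormedSpace ℝ V]
  [CompleteSpace V]

lemma map_integral_orbit [MeasurableSpace K] [MeasurableMul K] (μ : Measure K)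
    [μ.IsMulLeftInvariant] (ρ : K →* (V →L[ℝ] V)) {v : V}
    (hfi : Integrable (fun g => ρ g v) μ) (h : K) :
    ρ h (∫ g, ρ g v ∂μ) = ∫ g, ρ g v ∂μ := by
  rw [← (ρ h).integral_comp_comm hfi]
  simpa only [map_mul, mul_apply_eq_comp] using integral_mul_left_eq_self (fun g => ρ g v) h

lemma neg_orbit_mem_closure_hull_orbit [TopologicalSpace K] [IsTopologicalGroup K]
    [CompactSpace K] (ρ : K →* (V →L[ℝ] V)) (hcont : Continuous fun p : K × V => ρ p.1 p.2)
    (hinv : ∀ v : V, (∀ g : K, ρ g v = v) → v = 0) (v : V) (g : K) :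
    -ρ g v ∈ (hull ℝ (range fun g : K => ρ g v)).closure := by
  borelize K
  have hf : Continuous fun g : K => ρ g v := hcont.comp (.prodMk_left v)
  have hfi : Integrable (fun g : K => ρ g v) Measure.haar :=
    hf.integrable_of_hasCompactSupport (.of_compactSpace _)
  exact neg_mem_of_integral_eq_zero isClosed_closure hf hfi
    (fun g => subset_closure (subset_hull (mem_range_self g)))
    (hinv _ (map_integral_orbit Measure.haar ρ hfi)) g

end Representation

/-- Let `K` be a compact topological group acting continuously and linearly on a real
Banach space `V` with `V^K = {0}`. Then for every `v ∈ V` the smallest closed convex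
cone containing the orbit `{ρ(g)(v) : g ∈ K}` (namely the closure of
`{c·y : c ≥ 0, y ∈ convexHull(orbit)}`) equals the smallest closed linear subspace
containing the orbit (the closed `K`-cyclic subrepresentation generated by `v`); in
particular `−v` belongs to the closed convex cone generated by the orbit of `v`. -/
theorem closedConvexCone_orbit_eq_closedSpan
    {K : Type*} [Group K] [TopologicalSpace K] [IsTopologicalGroup K] [CompactSpace K]
    {V : Type*} [NormedAddCommGroup V] [NormedSpace ℝ V] [CompleteSpace V]
    (ρ : K →* (V →L[ℝ] V))
    (hcont : Continuous fun p : K × V => ρ p.1 p.2)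
    (hinv : ∀ v : V, (∀ g : K, ρ g v = v) → v = 0)
    (v : V) :
    closure {x : V | ∃ c : ℝ, 0 ≤ c ∧
        ∃ y ∈ convexHull ℝ (Set.range fun g : K => ρ g v), x = c • y}
      = closure ((Submodule.span ℝ (Set.range fun g : K => ρ g v) : Submodule ℝ V) : Set V)
    ∧ -v ∈ closure {x : V | ∃ c : ℝ, 0 ≤ c ∧
        ∃ y ∈ convexHull ℝ (Set.range fun g : K => ρ g v), x = c • y} := by
  set s := range fun g : K => ρ g v
  rw [setOf_smul_mem_convexHull_eq_hull (range_nonempty _)]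
  have hneg := neg_orbit_mem_closure_hull_orbit ρ hcont hinv v
  have hspan : Submodule.span ℝ s ≤ (hull ℝ s).closure.lineal :=
    Submodule.span_le.2 <| range_subset_iff.2 fun g =>
      ⟨subset_closure (subset_hull (mem_range_self g)), hneg g⟩
  refine ⟨(closure_mono (hull_le_span ℝ s)).antisymm ?_, by simpa using hneg 1⟩
  exact closure_minimal (fun x hx => lineal_le _ (hspan hx)) isClosed_closure
end

section
/- Let G be a topological group and let H be a real Hilbert space. Let α be a continuous action of G on H by affine isometries; write α(g)(x) = π(g)(x) + c(g), where π(g) is the linear part. Assume: (i) π is irreducible, i.e. the only closed π(G)-invariant linear subspaces of H are {0} and H; and (ii) there is a compact subgroup K ⊆ G such that the only π(K)-invariant vector is 0. Then every closed G-invariant convex subset C ⊆ H either equals H or contains no half-line, i.e. there are no x₀ ∈ H and w ∈ H with w ≠ 0 such that x₀ + s·w ∈ C for all s ≥ 0. -/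
/-!
Suppose `C ≠ H` contains the half-line `x₀ + ℝ≥0 • w` with `w ≠ 0`, and separate a point
outside `C` by a continuous functional `f` bounded above on `C`. As `C` also contains the
half-lines `α(g)(x₀) + ℝ≥0 • ρ(g) w`, we get `f (ρ g w) ≤ 0` for all `g`. The Haar average of
`k ↦ ρ(k g) w` over `K` is a `K`-fixed vector, hence `0`, so the nonpositive continuous function
`k ↦ f (ρ(k g) w)` has integral `0` and vanishes; in particular `f (ρ g w) = 0`. Thus `f` kills
the closed span of the orbit of `w`, which is invariant and nonzero, hence all of `H` by
irreducibility; so `f = 0`, contradicting the separation.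
-/

open MeasureTheory

theorem continuous_linearPart_apply {G E : Type*} [TopologicalSpace G]
    [SeminormedAddCommGroup E] [NormedSpace ℝ E] {ρ : G → E ≃ₗᵢ[ℝ] E} {c : G → E}
    (hcont : Continuous fun p : G × E => ρ p.1 p.2 + c p.1) (v : E) :
    Continuous fun g => ρ g v := by
  have hv : Continuous fun g => ρ g v + c g := hcont.comp (continuous_id.prodMk continuous_const)
  have h0 : Continuous fun g => ρ g 0 + c g := hcont.comp (continuous_id.prodMk continuous_const)
  refine (hv.sub h0).congr fun g => ?_
  simp

theorem LinearMap.apply_nonpos_of_halfLine_bddAbove {E : Type*} [AddCommGroup E]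
    [Module ℝ E] (f : E →ₗ[ℝ] ℝ) {x w : E} {u : ℝ} (h : ∀ s : ℝ, 0 ≤ s → f (x + s • w) ≤ u) :
    f w ≤ 0 := by
  by_contra! hw
  have hx := h 0 le_rfl
  rw [zero_smul, add_zero] at hx
  have := h ((u - f x + 1) / f w) (div_nonneg (by linarith) hw.le)
  rw [map_add, map_smul, smul_eq_mul, div_mul_cancel₀ _ hw.ne'] at this
  linarith

section Averaging

variable {K E : Type*} [Group K] [NormedAddCommGroup E] [NormedSpace ℝ E] [CompleteSpace E]

theorem map_integral_orbit_eq [MeasurableSpace K] [MeasurableMul K] (μ : Measure K)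
    [μ.IsMulLeftInvariant] (ρ : K →* (E ≃ₗᵢ[ℝ] E)) (v : E) (k₀ : K) :
    ρ k₀ (∫ k, ρ k v ∂μ) = ∫ k, ρ k v ∂μ := by
  calc ρ k₀ (∫ k, ρ k v ∂μ) = ∫ k, ρ k₀ (ρ k v) ∂μ :=
        ((ρ k₀).toLinearIsometry.integral_comp_comm _).symm
    _ = ∫ k, ρ (k₀ * k) v ∂μ := by
        simp only [map_mul, LinearIsometryEquiv.coe_mul, Function.comp_apply]
    _ = ∫ k, ρ k v ∂μ := integral_mul_left_eq_self (fun k => ρ k v) k₀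

variable [TopologicalSpace K] [IsTopologicalGroup K] [CompactSpace K]

theorem ContinuousLinearMap.apply_eq_zero_of_apply_orbit_nonpos (ρ : K →* (E ≃ₗᵢ[ℝ] E))
    (hρ : ∀ v, Continuous fun k => ρ k v) (hfix : ∀ v, (∀ k, ρ k v = v) → v = 0)
    (f : E →L[ℝ] ℝ) {v : E} (hf : ∀ k, f (ρ k v) ≤ 0) : f v = 0 := by
  let : MeasurableSpace K := borel K
  have : BorelSpace K := ⟨rfl⟩
  have hint : Integrable (fun k => ρ k v) (Measure.haar : Measure K) :=
    (hρ v).integrable_of_hasCompactSupport (HasCompactSupport.of_compactSpace _)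
  have havg : ∫ k, ρ k v ∂Measure.haar = 0 := hfix _ (map_integral_orbit_eq _ ρ v)
  by_contra hv
  have hpos : 0 < ∫ k, -f (ρ k v) ∂(Measure.haar : Measure K) :=
    integral_pos_of_integrable_nonneg_nonzero (x := 1) (f.continuous.comp (hρ v)).neg
      (f.integrable_comp hint).neg (fun k => neg_nonneg.mpr (hf k)) (by simpa using hv)
  rw [integral_neg, f.integral_comp_comm hint, havg, map_zero, neg_zero] at hpos
  exact lt_irrefl _ hpos

end Averaging

section OrbitSpan

variable {G E : Type*} [Monoid G] [SeminormedAddCommGroup E] [NormedSpace ℝ E]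

def orbitClosedSpan (ρ : G →* (E ≃ₗᵢ[ℝ] E)) (w : E) : Submodule ℝ E :=
  (Submodule.span ℝ (Set.range fun g => ρ g w)).topologicalClosure

theorem mem_orbitClosedSpan_self (ρ : G →* (E ≃ₗᵢ[ℝ] E)) (w : E) :
    w ∈ orbitClosedSpan ρ w :=
  Submodule.le_topologicalClosure _ (Submodule.subset_span ⟨1, by simp⟩)

theorem mapsTo_orbitClosedSpan (ρ : G →* (E ≃ₗᵢ[ℝ] E)) (w : E) (g : G) :
    ∀ x ∈ orbitClosedSpan ρ w, ρ g x ∈ orbitClosedSpan ρ w := by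
  set S := Submodule.span ℝ (Set.range fun g => ρ g w)
  have hspan : S ≤ S.comap (ρ g).toLinearEquiv.toLinearMap := Submodule.span_le.mpr <| by
    rintro _ ⟨g', rfl⟩
    exact Submodule.subset_span ⟨g * g', by simp⟩
  intro x hx
  rw [← SetLike.mem_coe, orbitClosedSpan, Submodule.topologicalClosure_coe] at hx ⊢
  have hmaps : Set.MapsTo (ρ g) S S := fun y hy => hspan hy
  exact hmaps.closure (ρ g).continuous hx

theorem ContinuousLinearMap.eq_zero_of_apply_orbit_eq_zero (ρ : G →* (E ≃ₗᵢ[ℝ] E))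
    (hirr : ∀ W : Submodule ℝ E, IsClosed (W : Set E) →
      (∀ g : G, ∀ x ∈ W, ρ g x ∈ W) → W = ⊥ ∨ W = ⊤)
    {w : E} (hw : w ≠ 0) (f : E →L[ℝ] ℝ) (hf : ∀ g, f (ρ g w) = 0) : f = 0 := by
  have htop : orbitClosedSpan ρ w = ⊤ := by
    refine (hirr (orbitClosedSpan ρ w) (Submodule.isClosed_topologicalClosure _)
      (mapsTo_orbitClosedSpan ρ w)).resolve_left fun hbot => hw ?_
    have hmem := mem_orbitClosedSpan_self ρ w
    rwa [hbot, Submodule.mem_bot] at hmem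
  have hker : orbitClosedSpan ρ w ≤ LinearMap.ker (f : E →ₗ[ℝ] ℝ) :=
    Submodule.topologicalClosure_minimal _
      (Submodule.span_le.mpr (Set.range_subset_iff.mpr hf)) f.isClosed_ker
  ext x
  exact hker (htop ▸ Submodule.mem_top)

end OrbitSpan

theorem invariant_convex_set_univ_or_no_halfline_general
    {G : Type*} [Group G] [TopologicalSpace G] [IsTopologicalGroup G]
    {H : Type*} [NormedAddCommGroup H] [InnerProductSpace ℝ H] [CompleteSpace H]
    (ρ : G →* (H ≃ₗᵢ[ℝ] H)) (c : G → H)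
    (hcont : Continuous fun p : G × H => ρ p.1 p.2 + c p.1)
    (hirr : ∀ W : Submodule ℝ H, IsClosed (W : Set H) →
      (∀ g : G, ∀ x ∈ W, ρ g x ∈ W) → W = ⊥ ∨ W = ⊤)
    (K : Subgroup G) (hK : IsCompact (K : Set G))
    (hKinv : ∀ v : H, (∀ g ∈ K, ρ g v = v) → v = 0)
    (C : Set H) (hCc : IsClosed C) (hCconv : Convex ℝ C)
    (hCinv : ∀ g : G, ∀ x ∈ C, ρ g x + c g ∈ C) :
    C = Set.univ ∨ ¬ ∃ (x₀ w : H), w ≠ 0 ∧ ∀ s : ℝ, 0 ≤ s → x₀ + s • w ∈ C := by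
  refine or_iff_not_imp_left.mpr fun hCne ⟨x₀, w, hw, hline⟩ => ?_
  obtain ⟨y, hy⟩ := (Set.ne_univ_iff_exists_notMem C).mp hCne
  obtain ⟨f, u, hfC, hfy⟩ := geometric_hahn_banach_closed_point hCconv hCc hy
  have hle : ∀ g, f (ρ g w) ≤ 0 := fun g =>
    LinearMap.apply_nonpos_of_halfLine_bddAbove (f : H →ₗ[ℝ] ℝ) (x := ρ g x₀ + c g) (u := u)
      fun s hs => by
        have := hfC _ (hCinv g _ (hline s hs))
        simp only [ContinuousLinearMap.coe_coe, map_add, map_smul, smul_eq_mul] at this ⊢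
        linarith
  have hzero : ∀ g, f (ρ g w) = 0 := fun g => by
    have := isCompact_iff_compactSpace.mp hK
    refine f.apply_eq_zero_of_apply_orbit_nonpos (ρ.comp K.subtype)
      (fun v => continuous_linearPart_apply hcont v |>.comp continuous_subtype_val)
      (fun v hv => hKinv v fun k hk => hv ⟨k, hk⟩) fun k => ?_
    simpa [map_mul, LinearIsometryEquiv.coe_mul] using hle (k * g)
  have hf : f = 0 := f.eq_zero_of_apply_orbit_eq_zero ρ hirr hw hzero
  have hx₀ := hfC x₀ (by simpa using hline 0 le_rfl)
  rw [hf, zero_apply] at hx₀ hfy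
  linarith

/-- Let `G` be a topological group acting continuously by affine isometries
`α(g)(x) = ρ(g)(x) + c(g)` on a real Hilbert space `H`, where the linear part `ρ` is a
homomorphism into the surjective linear isometries and `c` is the associated cocycle.
Assume (i) `ρ` is irreducible, and (ii) there is a compact subgroup `K ⊆ G` whose only
`ρ(K)`-invariant vector is `0`. Then every closed `G`-invariant convex subset `C ⊆ H`
either equals `H` or contains no half-line. -/
theorem invariant_convex_set_univ_or_no_halfline
    {G : Type*} [Group G] [TopologicalSpace G] [IsTopologicalGroup G]
    {H : Type*} [NormedAddCommGroup H] [InnerProductSpace ℝ H] [CompleteSpace H]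
    (ρ : G →* (H ≃ₗᵢ[ℝ] H)) (c : G → H)
    (hcoc : ∀ g h : G, c (g * h) = ρ g (c h) + c g)
    (hcont : Continuous fun p : G × H => ρ p.1 p.2 + c p.1)
    (hirr : ∀ W : Submodule ℝ H, IsClosed (W : Set H) →
      (∀ g : G, ∀ x ∈ W, ρ g x ∈ W) → W = ⊥ ∨ W = ⊤)
    (K : Subgroup G) (hK : IsCompact (K : Set G))
    (hKinv : ∀ v : H, (∀ g ∈ K, ρ g v = v) → v = 0)
    (C : Set H) (hCc : IsClosed C) (hCconv : Convex ℝ C)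
    (hCinv : ∀ g : G, ∀ x ∈ C, ρ g x + c g ∈ C) :
    C = Set.univ ∨ ¬ ∃ (x₀ w : H), w ≠ 0 ∧ ∀ s : ℝ, 0 ≤ s → x₀ + s • w ∈ C :=
  invariant_convex_set_univ_or_no_halfline_general ρ c hcont hirr K hK hKinv C hCc hCconv hCinv
end

section
/- Let H be a real Hilbert space, let U : H → H be a surjective linear isometry, let b ∈ H, and let α : H → H be the affine isometry α(x) = U(x) + b. Assume the displacement of α is bounded away from zero: inf_{x ∈ H} ‖α(x) − x‖ > 0. Then the sequence of ergodic averages (1/n)·∑_{j=0}^{n-1} U^j(b) converges in H, and its limit is a nonzero vector (namely the orthogonal projection of b onto the subspace of U-fixed vectors). -/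
/-!
By von Neumann's mean ergodic theorem the averages converge to the orthogonal projection `L` of
`b` onto the fixed subspace of `U`. If `L = 0`, then `b` is orthogonal to the fixed subspace,
which for a contraction lies in the closure of the range of `U - 1`. But
`U (-y) + b - (-y) = b - (U y - y)`, so the displacement of `α` at `-y` is the distance from `b`
to `U y - y`, and its infimum would vanish.
-/

open Filter

theorem LinearIsometryEquiv.coe_pow {R E : Type*} [Semiring R] [SeminormedAddCommGroup E]
    [Module R E] (f : E ≃ₗᵢ[R] E) (n : ℕ) : ⇑(f ^ n) = f^[n] :=
  hom_coe_pow _ rfl (fun _ _ ↦ rfl) _ _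

theorem LinearMap.iInf_norm_apply_add_sub_eq_zero_of_mem_closure {R E : Type*} [Ring R]
    [SeminormedAddCommGroup E] [Module R E] (f : E →ₗ[R] E) {b : E}
    (hb : b ∈ closure (LinearMap.range (f - 1) : Set E)) : ⨅ x, ‖f x + b - x‖ = 0 := by
  refine le_antisymm (le_of_forall_pos_le_add fun ε hε ↦ ?_)
    (Real.iInf_nonneg fun _ ↦ norm_nonneg _)
  obtain ⟨_, ⟨y, rfl⟩, hy⟩ := Metric.mem_closure_iff.1 hb ε hε
  calc ⨅ x, ‖f x + b - x‖ ≤ ‖f (-y) + b - -y‖ :=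
        ciInf_le ⟨0, by rintro _ ⟨x, rfl⟩; exact norm_nonneg _⟩ (-y)
    _ = dist b ((f - 1) y) := by
        rw [dist_eq_norm, map_neg, LinearMap.sub_apply, Module.End.one_apply]
        congr 1; abel
    _ ≤ 0 + ε := by linarith

section Contraction

variable {𝕜 E : Type*} [RCLike 𝕜] [NormedAddCommGroup E] [InnerProductSpace 𝕜 E]

theorem ContinuousLinearMap.orthogonal_range_sub_one_le_eqLocus_one (f : E →L[𝕜] E)
    (hf : ‖f‖ ≤ 1) :
    (LinearMap.range ((f : E →ₗ[𝕜] E) - 1))ᗮ ≤ f.eqLocus (1 : E →L[𝕜] E) := by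
  intro x hx
  have hinner : ∀ y, inner 𝕜 (f y) x = inner 𝕜 y x := by
    simpa [Submodule.mem_orthogonal, inner_sub_left, sub_eq_zero] using hx
  -- `‖f x‖ ≤ ‖x‖` and `re ⟪f x, x⟫ = ‖x‖²` force equality in Cauchy–Schwarz
  refine eq_of_norm_le_re_inner_eq_norm_sq (𝕜 := 𝕜) ?_ ?_
  · simpa using f.le_of_opNorm_le hf x
  · simp [hinner]

theorem ContinuousLinearMap.orthogonal_eqLocus_one_le_closure_range_sub_one [CompleteSpace E]
    (f : E →L[𝕜] E) (hf : ‖f‖ ≤ 1) :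
    (f.eqLocus (1 : E →L[𝕜] E))ᗮ ≤
      (LinearMap.range ((f : E →ₗ[𝕜] E) - 1)).topologicalClosure := by
  rw [← Submodule.orthogonal_orthogonal_eq_closure]
  exact Submodule.orthogonal_le (f.orthogonal_range_sub_one_le_eqLocus_one hf)

end Contraction

/-- Let `H` be a real Hilbert space, `U` a surjective linear isometry of `H`, `b ∈ H`,
and `α(x) = U(x) + b` the associated affine isometry. If the displacement of `α` is
bounded away from zero, i.e. `inf_x ‖α(x) − x‖ > 0`, then the ergodic averages
`(1/n)·∑_{j<n} U^j(b)` converge in `H` to a nonzero vector, namely the orthogonal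
projection of `b` onto the subspace of `U`-fixed vectors (characterized by being
`U`-fixed with `b − L` orthogonal to every `U`-fixed vector). -/
theorem ergodic_average_tendsto_nonzero
    {H : Type*} [NormedAddCommGroup H] [InnerProductSpace ℝ H] [CompleteSpace H]
    (U : H ≃ₗᵢ[ℝ] H) (b : H)
    (hdisp : 0 < ⨅ x : H, ‖U x + b - x‖) :
    ∃ L : H,
      Tendsto (fun n : ℕ => (n : ℝ)⁻¹ • ∑ j ∈ Finset.range n, (U ^ j) b)
        atTop (nhds L) ∧
      L ≠ 0 ∧ U L = L ∧ ∀ y : H, U y = y → (inner ℝ (b - L) y : ℝ) = 0 := by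
  set f : H →L[ℝ] H := U.toLinearIsometry.toContinuousLinearMap
  have hf : ‖f‖ ≤ 1 := U.toLinearIsometry.norm_toContinuousLinearMap_le
  set S := f.eqLocus (1 : H →L[ℝ] H)
  refine ⟨S.orthogonalProjectionOnto b, ?_, fun hL ↦ ?_, (S.orthogonalProjectionOnto b).2,
    fun y hy ↦ ?_⟩
  · simp only [U.coe_pow]
    exact f.tendsto_birkhoffAverage_orthogonalProjection hf b
  · rw [Submodule.coe_eq_zero, Submodule.orthogonalProjectionOnto_eq_zero_iff] at hL
    exact hdisp.ne' ((f : H →ₗ[ℝ] H).iInf_norm_apply_add_sub_eq_zero_of_mem_closure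
      (f.orthogonal_eqLocus_one_le_closure_range_sub_one hf hL))
  · rw [real_inner_comm]
    exact S.sub_starProjection_mem_orthogonal b y hy
end
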